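/- Let G be a finite group, k a field of characteristic 0, and μ, λ : G × G → kˣ a pair of functions. Call the pair (μ,λ) a universal twist if for every G-Frobenius algebra (G, A, ∘, 1, η, φ, χ) over k, the twisted data s(μ,λ)(A) := (G, A, ∘^μ, 1, η^μ, φ^λ, χ) — where a ∘^μ b = μ(g,h)·(a∘b) for a ∈ A_g, b ∈ A_h, η^μ(a,b) = μ(g,g⁻¹)·η(a,b) for a ∈ A_g, b ∈ A_{g⁻¹}, and φ^λ_g(a) = λ(g,h)·φ_g(a) for a ∈ A_h — is again a G-Frobenius algebra. Then (μ,λ) is a universal twist if and only if μ is a normalized 2-cocycle on G with values in kˣ (i.e. μ(g,h)·μ(g*h,l) = μ(h,l)·μ(g,h*l) and μ(e,g) = μ(g,e) = 1) and λ(g,h) = μ(g,h)·μ(g*h*g⁻¹, g)⁻¹ for all g,h ∈ G. In particular, universal twists are in bijection with the set Z²(G,kˣ) of normalized 2-cocycles. -/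

import Mathlib

/-- A `G`-Frobenius algebra over a field `k` of characteristic zero (Kaufmann):
a finite-dimensional `G`-graded `k`-vector space `A = ⊕_g A_g` (the grading given by
submodules together with the projections onto them), with an associative bilinear
multiplication respecting the grading, unit `1 ∈ A_e`, a nondegenerate graded invariant
bilinear form `η`, a `G`-action `φ` by algebra automorphisms with
`φ_g(A_h) ⊆ A_{g h g⁻¹}`, and a character `χ : G → kˣ`, satisfying twisted
commutativity, projective self-invariance, projective invariance of the metric and the
projective trace axiom. -/
structure GFrobeniusAlgebra (G : Type) [Group G] [Fintype G]
    (k : Type) [Field k] [CharZero k]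
    (A : Type) [AddCommGroup A] [Module k A] : Type where
  grading : G → Submodule k A
  proj : G → A →ₗ[k] A
  proj_mem : ∀ (g : G) (a : A), proj g a ∈ grading g
  proj_of_mem : ∀ (g : G), ∀ a ∈ grading g, proj g a = a
  proj_of_ne : ∀ (g h : G), g ≠ h → ∀ a ∈ grading g, proj h a = 0
  sum_proj : ∀ a : A, (∑ g : G, proj g a) = a
  finiteDim : FiniteDimensional k A
  mul : A →ₗ[k] A →ₗ[k] A
  mul_assoc' : ∀ a b c : A, mul (mul a b) c = mul a (mul b c)
  one : A
  one_mem : one ∈ grading 1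
  one_mul' : ∀ a : A, mul one a = a
  mul_one' : ∀ a : A, mul a one = a
  mul_mem : ∀ (g h : G), ∀ a ∈ grading g, ∀ b ∈ grading h, mul a b ∈ grading (g * h)
  η : A →ₗ[k] A →ₗ[k] k
  η_nondeg : ∀ a : A, (∀ b : A, η a b = 0) → a = 0
  η_graded : ∀ (g h : G), g * h ≠ 1 → ∀ a ∈ grading g, ∀ b ∈ grading h, η a b = 0
  η_invariant : ∀ a b c : A, η a (mul b c) = η (mul a b) c
  φ : G → A →ₗ[k] A
  φ_one : φ 1 = LinearMap.id
  φ_mul : ∀ g h : G, φ (g * h) = φ g ∘ₗ φ h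
  φ_algebra : ∀ (g : G) (a b : A), φ g (mul a b) = mul (φ g a) (φ g b)
  φ_unit : ∀ g : G, φ g one = one
  φ_grading : ∀ (g h : G), ∀ a ∈ grading h, φ g a ∈ grading (g * h * g⁻¹)
  χ : G →* kˣ
  twisted_comm : ∀ (g : G), ∀ a ∈ grading g, ∀ b : A, mul a b = mul (φ g b) a
  self_invariance : ∀ (g : G), ∀ a ∈ grading g, φ g a = (((χ g)⁻¹ : kˣ) : k) • a
  metric_invariance : ∀ (g : G) (a b : A),
    η (φ g a) (φ g b) = ((((χ g)⁻¹ : kˣ) : k)) ^ 2 * η a b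
  trace_axiom : ∀ (g h : G), ∀ c ∈ grading (g * h * g⁻¹ * h⁻¹),
    ((χ h : kˣ) : k) * LinearMap.trace k A (proj g ∘ₗ mul c ∘ₗ φ h ∘ₗ proj g)
      = ((χ g⁻¹ : kˣ) : k) * LinearMap.trace k A (proj h ∘ₗ φ g⁻¹ ∘ₗ mul c ∘ₗ proj h)

/-- A pair of functions `(μ, lam) : G × G → kˣ` is a *universal twist* if for every
`G`-Frobenius algebra `A` the twisted data `s(μ,lam)(A)` — multiplication re-scaled by
`μ(g,h)` on `A_g ⊗ A_h`, metric re-scaled by `μ(g,g⁻¹)` on `A_g ⊗ A_{g⁻¹}`, `G`-action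
re-scaled by `lam(g,h)` on `A_h`, same grading, unit, and character — is again a
`G`-Frobenius algebra. -/
def IsUniversalTwist (G : Type) [Group G] [Fintype G]
    (k : Type) [Field k] [CharZero k] (μ lam : G → G → kˣ) : Prop :=
  ∀ (A : Type) [AddCommGroup A] [Module k A] (F : GFrobeniusAlgebra G k A),
    ∃ F' : GFrobeniusAlgebra G k A,
      F'.grading = F.grading ∧
      F'.proj = F.proj ∧
      F'.one = F.one ∧
      F'.χ = F.χ ∧
      (∀ (g h : G), ∀ a ∈ F.grading g, ∀ b ∈ F.grading h,
        F'.mul a b = ((μ g h : kˣ) : k) • F.mul a b) ∧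
      (∀ g : G, ∀ a ∈ F.grading g, ∀ b ∈ F.grading g⁻¹,
        F'.η a b = ((μ g g⁻¹ : kˣ) : k) * F.η a b) ∧
      (∀ (g h : G), ∀ a ∈ F.grading h,
        F'.φ g a = ((lam g h : kˣ) : k) • F.φ g a)

set_option maxHeartbeats 1000000
set_option linter.unusedSectionVars false

section GroupAlg
variable {G : Type} [Group G] [Fintype G] [DecidableEq G] {k : Type} [Field k] [CharZero k]

/-- convolution product on `G → k` -/
noncomputable def conv (G : Type) [Group G] [Fintype G] (k : Type) [Field k] :
    (G → k) →ₗ[k] (G → k) →ₗ[k] (G → k) :=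
  LinearMap.mk₂ k (fun a b z => ∑ x : G, a x * b (x⁻¹ * z))
    (fun a a' b => by funext z; simp [add_mul, Finset.sum_add_distrib])
    (fun c a b => by funext z; simp [Finset.mul_sum, mul_assoc])
    (fun a b b' => by funext z; simp [mul_add, Finset.sum_add_distrib])
    (fun c a b => by
      funext z
      simp [Finset.mul_sum]
      exact Finset.sum_congr rfl fun x _ => by ring)

lemma conv_apply (a b : G → k) (z : G) : conv G k a b z = ∑ x : G, a x * b (x⁻¹ * z) := rfl

/-- delta function -/
noncomputable def dd (g : G) : G → k := Pi.single g 1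

lemma dd_apply (g x : G) : (dd g : G → k) x = if x = g then 1 else 0 := by
  simp [dd, Pi.single_apply]

lemma smul_dd_apply (c : k) (g x : G) : (c • (dd g : G → k)) x = if x = g then c else 0 := by
  simp [dd_apply, Pi.smul_apply]

lemma conv_single (g h : G) (c d : k) :
    conv G k (c • (dd g : G → k)) (d • dd h) = (c * d) • (dd (g * h) : G → k) := by
  funext z
  rw [conv_apply, Finset.sum_eq_single g]
  · rw [smul_dd_apply, smul_dd_apply, smul_dd_apply, if_pos rfl]
    simp only [inv_mul_eq_iff_eq_mul]
    split_ifs <;> ring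
  · intro x _ hx
    rw [smul_dd_apply, if_neg hx, zero_mul]
  · simp

lemma sum_single_eq (a : G → k) : ∑ g : G, a g • (dd g : G → k) = a := by
  funext x
  simp [dd, Pi.single_apply]

lemma conv_assoc (a b c : G → k) : conv G k (conv G k a b) c = conv G k a (conv G k b c) := by
  funext z
  simp only [conv_apply, Finset.sum_mul, Finset.mul_sum]
  rw [Finset.sum_comm]
  refine Finset.sum_congr rfl fun x _ => ?_
  rw [← Equiv.sum_comp (Equiv.mulLeft x)]
  refine Finset.sum_congr rfl fun y _ => ?_
  simp only [Equiv.coe_mulLeft]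
  rw [mul_assoc]
  congr 2
  · group
  · group

lemma one_conv (a : G → k) : conv G k (dd 1) a = a := by
  funext z
  rw [conv_apply, Finset.sum_eq_single 1]
  · rw [dd_apply, if_pos rfl]; simp
  · intro x _ hx
    rw [dd_apply, if_neg hx, zero_mul]
  · simp

lemma conv_one (a : G → k) : conv G k a (dd 1) = a := by
  funext z
  rw [conv_apply, Finset.sum_eq_single z]
  · rw [dd_apply, if_pos (by group)]; simp
  · intro x _ hx
    rw [dd_apply, if_neg (fun h' : x⁻¹ * z = 1 => hx (by rw [inv_mul_eq_one] at h'; rw [h'])),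
      mul_zero]
  · simp

lemma mem_grading_iff (g : G) (a : G → k) :
    a ∈ Submodule.span k {(dd g : G → k)} ↔ ∃ c : k, a = c • dd g := by
  rw [Submodule.mem_span_singleton]
  constructor
  · rintro ⟨c, rfl⟩; exact ⟨c, rfl⟩
  · rintro ⟨c, rfl⟩; exact ⟨c, rfl⟩

/-- conjugation action on `G → k` -/
noncomputable def φconj (g : G) : (G → k) →ₗ[k] (G → k) :=
  LinearMap.funLeft k k (fun x => g⁻¹ * x * g)

lemma φconj_apply (g : G) (a : G → k) (x : G) : φconj g a x = a (g⁻¹ * x * g) := rfl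

lemma φconj_one : (φconj 1 : (G → k) →ₗ[k] (G → k)) = LinearMap.id := by
  unfold φconj
  have : (fun x : G => (1:G)⁻¹ * x * 1) = id := by funext x; simp
  rw [this]
  rfl

lemma φconj_mul (g h : G) :
    (φconj (g * h) : (G → k) →ₗ[k] (G → k)) = φconj g ∘ₗ φconj h := by
  unfold φconj
  have : (fun x : G => (g*h)⁻¹ * x * (g*h))
      = (fun x : G => h⁻¹ * x * h) ∘ (fun x : G => g⁻¹ * x * g) := by
    funext x; simp only [Function.comp]; group
  rw [this, LinearMap.funLeft_comp]

lemma φconj_dd (h g : G) (c : k) :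
    φconj h (c • (dd g : G → k)) = c • (dd (h * g * h⁻¹) : G → k) := by
  funext x
  rw [φconj_apply, smul_dd_apply, smul_dd_apply]
  congr 1
  rw [eq_iff_iff]
  constructor
  · intro h'; rw [show x = h * (h⁻¹ * x * h) * h⁻¹ from by group, h']
  · intro h'; rw [h']; group

lemma trace_proj (g : G) :
    LinearMap.trace k (G → k) ((LinearMap.proj g).smulRight (dd g)) = 1 := by
  have h1 : (LinearMap.proj g).smulRight (dd g)
      = (LinearMap.toSpanSingleton k (G → k) (dd g)) ∘ₗ
        (LinearMap.proj g : (G → k) →ₗ[k] k) := by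
    refine LinearMap.ext fun a => ?_
    simp [LinearMap.toSpanSingleton, LinearMap.smulRight_apply]
  rw [h1, LinearMap.trace_comp_comm']
  have h2 : (LinearMap.proj g : (G → k) →ₗ[k] k) ∘ₗ
      LinearMap.toSpanSingleton k (G → k) (dd g) = LinearMap.id := by
    refine LinearMap.ext fun c => ?_
    simp [LinearMap.toSpanSingleton, dd_apply]
  rw [h2, LinearMap.trace_id]
  simp

/-- The group algebra (modelled on `G → k`) as a G-Frobenius algebra. -/
noncomputable def groupFrob (G : Type) [Group G] [Fintype G] [DecidableEq G]
    (k : Type) [Field k] [CharZero k] :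
    GFrobeniusAlgebra G k (G → k) where
  grading g := Submodule.span k {dd g}
  proj g := (LinearMap.proj g).smulRight (dd g)
  proj_mem g a := Submodule.smul_mem _ _ (Submodule.mem_span_singleton_self _)
  proj_of_mem g a ha := by
    obtain ⟨c, rfl⟩ := (mem_grading_iff g a).mp ha
    simp [LinearMap.smulRight_apply, LinearMap.proj_apply, dd_apply, smul_smul]
  proj_of_ne g h hgh a ha := by
    obtain ⟨c, rfl⟩ := (mem_grading_iff g a).mp ha
    simp only [LinearMap.smulRight_apply, LinearMap.proj_apply, smul_dd_apply,
      if_neg (Ne.symm hgh), zero_smul]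
  sum_proj a := by
    simp only [LinearMap.smulRight_apply, LinearMap.proj_apply]
    exact sum_single_eq a
  finiteDim := inferInstance
  mul := conv G k
  mul_assoc' := conv_assoc
  one := dd 1
  one_mem := Submodule.mem_span_singleton_self _
  one_mul' := one_conv
  mul_one' := conv_one
  mul_mem g h a ha b hb := by
    obtain ⟨c, rfl⟩ := (mem_grading_iff _ _).mp ha
    obtain ⟨d, rfl⟩ := (mem_grading_iff _ _).mp hb
    rw [conv_single]
    exact Submodule.smul_mem _ _ (Submodule.mem_span_singleton_self _)
  η := (conv G k).compr₂ (LinearMap.proj 1)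
  η_nondeg a ha := by
    funext g
    have h1 := ha (dd g⁻¹)
    simp only [LinearMap.compr₂_apply, LinearMap.proj_apply, conv_apply] at h1
    rw [Finset.sum_eq_single g] at h1
    · rw [dd_apply, if_pos (by group)] at h1
      simpa using h1
    · intro x _ hx
      rw [dd_apply, if_neg (fun h' : x⁻¹ * 1 = g⁻¹ => hx (by
        rw [mul_one] at h'; rw [← inv_inv x, h', inv_inv])), mul_zero]
    · simp
  η_graded g h hgh a ha b hb := by
    obtain ⟨c, rfl⟩ := (mem_grading_iff _ _).mp ha
    obtain ⟨d, rfl⟩ := (mem_grading_iff _ _).mp hb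
    simp only [LinearMap.compr₂_apply, LinearMap.proj_apply]
    rw [conv_single, smul_dd_apply, if_neg (fun h' : (1:G) = g * h => hgh h'.symm)]
  η_invariant a b c := by
    simp only [LinearMap.compr₂_apply, LinearMap.proj_apply]
    exact (congrFun (conv_assoc a b c) 1).symm
  φ := φconj
  φ_one := φconj_one
  φ_mul := φconj_mul
  φ_algebra g a b := by
    funext z
    simp only [φconj_apply, conv_apply]
    rw [← Equiv.sum_comp (MulAut.conj g⁻¹).toEquiv]
    refine Finset.sum_congr rfl fun x _ => ?_
    simp only [MulEquiv.toEquiv_eq_coe, EquivLike.coe_coe, MulAut.conj_apply]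
    congr 1
    · congr 1; group
    · congr 1; group
  φ_unit g := by
    funext x
    simp only [φconj_apply]
    rw [dd_apply, dd_apply]
    congr 1
    rw [eq_iff_iff]
    constructor
    · intro h'; rw [show x = g * (g⁻¹ * x * g) * g⁻¹ from by group, h']; group
    · intro h'; rw [h']; group
  φ_grading g h a ha := by
    obtain ⟨c, rfl⟩ := (mem_grading_iff _ _).mp ha
    apply (mem_grading_iff _ _).mpr
    refine ⟨c, ?_⟩
    funext x
    simp only [φconj_apply, smul_dd_apply]
    congr 1
    rw [eq_iff_iff]
    constructor
    · intro h'; rw [show x = g * (g⁻¹ * x * g) * g⁻¹ from by group, h']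
    · intro h'; rw [h']; group
  χ := 1
  twisted_comm g a ha b := by
    obtain ⟨c, rfl⟩ := (mem_grading_iff _ _).mp ha
    funext z
    simp only [conv_apply, φconj_apply]
    rw [Finset.sum_eq_single g, Finset.sum_eq_single (z * g⁻¹)]
    · rw [smul_dd_apply, smul_dd_apply, if_pos rfl, if_pos (by group)]
      rw [show g⁻¹ * (z * g⁻¹) * g = g⁻¹ * z from by group]
      ring
    · intro x _ hx
      rw [smul_dd_apply, if_neg (fun h' : x⁻¹ * z = g => hx (by
        rw [eq_comm, eq_inv_mul_iff_mul_eq] at h'; rw [← h']; group)), mul_zero]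
    · simp
    · intro x _ hx
      rw [smul_dd_apply, if_neg hx, zero_mul]
    · simp
  self_invariance g a ha := by
    obtain ⟨c, rfl⟩ := (mem_grading_iff _ _).mp ha
    funext x
    simp only [φconj_apply, MonoidHom.one_apply, inv_one, Units.val_one, one_smul]
    rw [smul_dd_apply, smul_dd_apply]
    congr 1
    rw [eq_iff_iff]
    constructor
    · intro h'; rw [show x = g * (g⁻¹ * x * g) * g⁻¹ from by group, h']; group
    · intro h'; rw [h']; group
  metric_invariance g a b := by
    simp only [LinearMap.compr₂_apply, LinearMap.proj_apply, conv_apply,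
      φconj_apply, MonoidHom.one_apply, inv_one, Units.val_one, one_pow, one_mul]
    rw [← Equiv.sum_comp (MulAut.conj g).toEquiv]
    refine Finset.sum_congr rfl fun x _ => ?_
    simp only [MulEquiv.toEquiv_eq_coe, EquivLike.coe_coe, MulAut.conj_apply]
    congr 2
    · group
    · group
  trace_axiom g h c hc := by
    obtain ⟨t, rfl⟩ := (mem_grading_iff _ _).mp hc
    have hL : ((LinearMap.proj g).smulRight (dd g) ∘ₗ conv G k (t • dd (g*h*g⁻¹*h⁻¹)) ∘ₗ
        φconj h ∘ₗ (LinearMap.proj g).smulRight (dd g) : (G → k) →ₗ[k] (G → k))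
        = t • ((LinearMap.proj g).smulRight (dd g)) := by
      refine LinearMap.ext fun a => ?_
      simp only [LinearMap.coe_comp, Function.comp_apply, LinearMap.smulRight_apply,
        LinearMap.proj_apply, LinearMap.smul_apply]
      rw [φconj_dd, conv_single, show (g*h*g⁻¹*h⁻¹) * (h*g*h⁻¹) = g from by group]
      simp [dd_apply, smul_smul, mul_comm]
    have hR : ((LinearMap.proj h).smulRight (dd h) ∘ₗ φconj g⁻¹ ∘ₗ
        conv G k (t • dd (g*h*g⁻¹*h⁻¹)) ∘ₗ (LinearMap.proj h).smulRight (dd h)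
        : (G → k) →ₗ[k] (G → k))
        = t • ((LinearMap.proj h).smulRight (dd h)) := by
      refine LinearMap.ext fun a => ?_
      simp only [LinearMap.coe_comp, Function.comp_apply, LinearMap.smulRight_apply,
        LinearMap.proj_apply, LinearMap.smul_apply]
      rw [show (a h • (dd h : G → k)) = (a h • (dd h : G → k)) from rfl, conv_single,
        show (g*h*g⁻¹*h⁻¹) * h = g*h*g⁻¹ from by group, φconj_dd,
        show g⁻¹ * (g*h*g⁻¹) * g⁻¹⁻¹ = h from by group]
      simp [dd_apply, smul_smul, mul_comm]
    rw [hL, hR, map_smul, map_smul, trace_proj, trace_proj]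
    simp

end GroupAlg
section Forward
variable {G : Type} [Group G] [Fintype G] [DecidableEq G] {k : Type} [Field k] [CharZero k]

lemma conv_dd (u v : G) : conv G k (dd u) (dd v) = (dd (u * v) : G → k) := by
  have := conv_single (k := k) u v 1 1
  simpa using this

lemma dd_ne_zero (g : G) : (dd g : G → k) ≠ 0 := fun H => by
  have := congrFun H g
  rw [dd_apply, if_pos rfl] at this
  exact one_ne_zero this

lemma smul_dd_cancel {c d : k} {g : G} (h : c • (dd g : G → k) = d • dd g) : c = d := by
  have := congrFun h g
  simpa [dd_apply] using this

lemma units_eq_of_coe {a b : kˣ} (h : (a : k) = b) : a = b := Units.ext h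

lemma forward_direction (μ lam : G → G → kˣ) (H : IsUniversalTwist G k μ lam) :
    ((∀ g h l : G, μ g h * μ (g * h) l = μ h l * μ g (h * l)) ∧
      (∀ g : G, μ 1 g = 1 ∧ μ g 1 = 1) ∧
      (∀ g h : G, lam g h = μ g h * (μ (g * h * g⁻¹) g)⁻¹)) := by
  obtain ⟨F', hgrading, hproj, hone, hχ, hmul, hη, hφ⟩ := H (G → k) (groupFrob G k)
  have hmem : ∀ g : G, (dd g : G → k) ∈ (groupFrob G k).grading g := fun g =>
    Submodule.mem_span_singleton_self _
  have hmul' : ∀ u v : G, F'.mul (dd u) (dd v) = ((μ u v : kˣ) : k) • (dd (u * v) : G → k) := by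
    intro u v
    rw [hmul u v _ (hmem u) _ (hmem v)]
    congr 1
    exact conv_dd u v
  -- cocycle
  refine ⟨?_, ?_, ?_⟩
  · intro g h l
    have e1 : F'.mul (F'.mul (dd g) (dd h)) (dd l)
        = (((μ g h : kˣ) : k) * ((μ (g*h) l : kˣ) : k)) • (dd (g*h*l) : G → k) := by
      rw [hmul' g h, map_smul, LinearMap.smul_apply, hmul' (g*h) l, smul_smul]
    have e2 : F'.mul (dd g) (F'.mul (dd h) (dd l))
        = (((μ h l : kˣ) : k) * ((μ g (h*l) : kˣ) : k)) • (dd (g*h*l) : G → k) := by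
      rw [hmul' h l, map_smul, hmul' g (h*l), smul_smul, mul_assoc g h l]
    have e3 := (F'.mul_assoc' (dd g) (dd h) (dd l)).trans e2
    rw [e1] at e3
    have := smul_dd_cancel e3
    apply units_eq_of_coe
    push_cast
    exact this
  · intro g
    constructor
    · apply units_eq_of_coe
      have e1 := F'.one_mul' (dd g)
      rw [hone] at e1
      rw [show (groupFrob G k).one = (dd 1 : G → k) from rfl] at e1
      rw [hmul' 1 g, one_mul] at e1
      have : ((μ 1 g : kˣ) : k) • (dd g : G → k) = (1:k) • dd g := by rw [e1, one_smul]
      simpa using smul_dd_cancel this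
    · apply units_eq_of_coe
      have e1 := F'.mul_one' (dd g)
      rw [hone] at e1
      rw [show (groupFrob G k).one = (dd 1 : G → k) from rfl] at e1
      rw [hmul' g 1, mul_one] at e1
      have : ((μ g 1 : kˣ) : k) • (dd g : G → k) = (1:k) • dd g := by rw [e1, one_smul]
      simpa using smul_dd_cancel this
  · intro g h
    have hmemF' : (dd g : G → k) ∈ F'.grading g := by rw [hgrading]; exact hmem g
    have e1 := F'.twisted_comm g (dd g) hmemF' (dd h)
    rw [hmul' g h] at e1
    rw [hφ g h _ (hmem h)] at e1
    rw [show (groupFrob G k).φ g (dd h) = (dd (g * h * g⁻¹) : G → k) from by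
      show φconj g (dd h) = _
      have := φconj_dd (k := k) g h 1
      simpa using this] at e1
    rw [map_smul, LinearMap.smul_apply, hmul' (g*h*g⁻¹) g,
      show g * h * g⁻¹ * g = g * h from by group, smul_smul] at e1
    have e2 := smul_dd_cancel e1
    have : μ g h = lam g h * μ (g * h * g⁻¹) g := by
      apply units_eq_of_coe
      push_cast
      exact e2
    rw [this]
    rw [mul_assoc, mul_inv_cancel, mul_one]
section Twist
variable {G : Type} [Group G] [Fintype G] {k : Type} [Field k] [CharZero k]
  {A : Type} [AddCommGroup A] [Module k A]

variable (F : GFrobeniusAlgebra G k A) (μ lam : G → G → kˣ)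

/-- twisted multiplication -/
noncomputable def tmul : A →ₗ[k] A →ₗ[k] A :=
  ∑ g : G, ∑ h : G, ((μ g h : kˣ) : k) • ((F.mul ∘ₗ F.proj g).compl₂ (F.proj h))

lemma tmul_apply (a b : A) :
    tmul F μ a b = ∑ g : G, ∑ h : G, ((μ g h : kˣ) : k) • F.mul (F.proj g a) (F.proj h b) := by
  simp [tmul, LinearMap.sum_apply, LinearMap.smul_apply, LinearMap.compl₂_apply]

lemma tmul_left {g : G} {a : A} (ha : a ∈ F.grading g) (b : A) :
    tmul F μ a b = ∑ h : G, ((μ g h : kˣ) : k) • F.mul a (F.proj h b) := by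
  rw [tmul_apply, Finset.sum_eq_single g]
  · rw [F.proj_of_mem g a ha]
  · intro x _ hx
    rw [F.proj_of_ne g x (Ne.symm hx) a ha]
    simp
  · simp

lemma tmul_right {h : G} {b : A} (hb : b ∈ F.grading h) (a : A) :
    tmul F μ a b = ∑ g : G, ((μ g h : kˣ) : k) • F.mul (F.proj g a) b := by
  rw [tmul_apply]
  refine Finset.sum_congr rfl fun g _ => ?_
  rw [Finset.sum_eq_single h]
  · rw [F.proj_of_mem h b hb]
  · intro x _ hx
    rw [F.proj_of_ne h x (Ne.symm hx) b hb]
    simp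
  · simp

lemma tmul_hom {g h : G} {a b : A} (ha : a ∈ F.grading g) (hb : b ∈ F.grading h) :
    tmul F μ a b = ((μ g h : kˣ) : k) • F.mul a b := by
  rw [tmul_left F μ ha, Finset.sum_eq_single h]
  · rw [F.proj_of_mem h b hb]
  · intro x _ hx
    rw [F.proj_of_ne h x (Ne.symm hx) b hb]
    simp
  · simp

/-- twisted metric -/
noncomputable def tη : A →ₗ[k] A →ₗ[k] k :=
  ∑ g : G, ((μ g g⁻¹ : kˣ) : k) • ((F.η ∘ₗ F.proj g).compl₂ (F.proj g⁻¹))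

lemma tη_apply (a b : A) :
    tη F μ a b = ∑ g : G, ((μ g g⁻¹ : kˣ) : k) • F.η (F.proj g a) (F.proj g⁻¹ b) := by
  simp [tη, LinearMap.sum_apply, LinearMap.smul_apply, LinearMap.compl₂_apply]

lemma η_proj {h : G} {b : A} (hb : b ∈ F.grading h) (a : A) :
    F.η (F.proj h⁻¹ a) b = F.η a b := by
  conv_rhs => rw [← F.sum_proj a]
  rw [map_sum, LinearMap.sum_apply, Finset.sum_eq_single h⁻¹]
  · intro x _ hx
    exact F.η_graded x h (fun h' => hx (eq_inv_of_mul_eq_one_left h')) _ (F.proj_mem x a) b hb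
  · simp

lemma tη_right {h : G} {b : A} (hb : b ∈ F.grading h) (a : A) :
    tη F μ a b = ((μ h⁻¹ h : kˣ) : k) * F.η a b := by
  rw [tη_apply, Finset.sum_eq_single h⁻¹]
  · rw [inv_inv, F.proj_of_mem h b hb, η_proj F hb, smul_eq_mul]
  · intro x _ hx
    rw [F.proj_of_ne h x⁻¹ (fun h' => hx (by rw [h', inv_inv])) b hb]
    simp
  · simp

/-- twisted G-action -/
noncomputable def tφ (g : G) : A →ₗ[k] A :=
  ∑ h : G, ((lam g h : kˣ) : k) • (F.φ g ∘ₗ F.proj h)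

lemma tφ_apply (g : G) (a : A) :
    tφ F lam g a = ∑ h : G, ((lam g h : kˣ) : k) • F.φ g (F.proj h a) := by
  simp [tφ, LinearMap.sum_apply, LinearMap.smul_apply]

lemma tφ_hom (g : G) {h : G} {a : A} (ha : a ∈ F.grading h) :
    tφ F lam g a = ((lam g h : kˣ) : k) • F.φ g a := by
  rw [tφ_apply, Finset.sum_eq_single h]
  · rw [F.proj_of_mem h a ha]
  · intro x _ hx
    rw [F.proj_of_ne h x (Ne.symm hx) a ha]
    simp
  · simp

end Twist
section Scalars
variable {G : Type} [Group G] {k : Type} [Field k] (μ lam : G → G → kˣ)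

section
variable
  (hck : ∀ g h l : G, ((μ g h : kˣ) : k) * ((μ (g*h) l : kˣ) : k)
      = ((μ h l : kˣ) : k) * ((μ g (h*l) : kˣ) : k))
  (hnk : ∀ g : G, ((μ 1 g : kˣ) : k) = 1 ∧ ((μ g 1 : kˣ) : k) = 1)
  (hlk : ∀ g h : G, ((lam g h : kˣ) : k) * ((μ (g*h*g⁻¹) g : kˣ) : k) = ((μ g h : kˣ) : k))

include hck hnk hlk

lemma S1 (h : G) : ((lam 1 h : kˣ) : k) = 1 := by
  have h1 := hlk 1 h
  rw [show (1:G)*h*(1:G)⁻¹ = h from by group] at h1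
  rw [(hnk h).2, mul_one, (hnk h).1] at h1
  exact h1

lemma S2 (g : G) : ((lam g 1 : kˣ) : k) = 1 := by
  have h1 := hlk g 1
  rw [show g*(1:G)*g⁻¹ = 1 from by group] at h1
  rw [(hnk g).1, mul_one, (hnk g).2] at h1
  exact h1

lemma S3 (g : G) : ((lam g g : kˣ) : k) = 1 := by
  have h1 := hlk g g
  rw [show g*g*g⁻¹ = g from by group] at h1
  have := mul_right_cancel₀ (Units.ne_zero (μ g g)) (h1.trans (one_mul _).symm)
  exact this

lemma S4 (g h w : G) :
    ((lam (g*h) w : kˣ) : k) = ((lam g (h*w*h⁻¹) : kˣ) : k) * ((lam h w : kˣ) : k) := by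
  have h1 := hlk (g*h) w
  rw [show g*h*w*(g*h)⁻¹ = g*(h*w*h⁻¹)*g⁻¹ from by group] at h1
  have h2 := hlk g (h*w*h⁻¹)
  have h3 := hlk h w
  have i1 := hck g h w
  have i2 := hck (g*(h*w*h⁻¹)*g⁻¹) g h
  rw [show g*(h*w*h⁻¹)*g⁻¹*g = g*(h*w*h⁻¹) from by group] at i2
  have i3 := hck g (h*w*h⁻¹) h
  rw [show h*w*h⁻¹*h = h*w from by group] at i3
  have key : (((lam (g*h) (w) : kˣ) : k)) * (((μ (g*(h*w*h⁻¹)*g⁻¹) (g*h) : kˣ) : k) * ((μ (g) (h) : kˣ) : k) * ((μ (g*h) (w) : kˣ) : k) * ((μ (g*(h*w*h⁻¹)*g⁻¹) (g) : kˣ) : k) * ((μ (g*(h*w*h⁻¹)) (h) : kˣ) : k) * ((μ (g) (h*w*h⁻¹) : kˣ) : k) * ((μ (h*w*h⁻¹) (h) : kˣ) : k) * ((μ (g) (h*w) : kˣ) : k) * ((μ (h) (w) : kˣ) : k)) = (((lam (g) (h*w*h⁻¹) : kˣ) : k) * ((lam (h) (w) : kˣ) : k)) * (((μ (g*(h*w*h⁻¹)*g⁻¹)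 (g*h) : kˣ) : k) * ((μ (g) (h) : kˣ) : k) * ((μ (g*h) (w) : kˣ) : k) * ((μ (g*(h*w*h⁻¹)*g⁻¹) (g) : kˣ) : k) * ((μ (g*(h*w*h⁻¹)) (h) : kˣ) : k) * ((μ (g) (h*w*h⁻¹) : kˣ) : k) * ((μ (h*w*h⁻¹) (h) : kˣ) : k) * ((μ (g) (h*w) : kˣ) : k) * ((μ (h) (w) : kˣ) : k)) := by
    linear_combination (((μ (g) (h) : kˣ) : k) * ((μ (g*h) (w) : kˣ) : k) * ((μ (g*(h*w*h⁻¹)*g⁻¹) (g) : kˣ) : k) * ((μ (g*(h*w*h⁻¹)) (h) : kˣ) : k) * ((μ (g) (h*w*h⁻¹) : kˣ) : k) * ((μ (h*w*h⁻¹) (h) : kˣ) : k) * ((μ (g) (h*w) : kˣ) : k) * ((μ (h) (w) : kˣ) : k)) * h1 + (((μ (g*h) (w) : kˣ) : k) * ((μ (g*(h*w*h⁻¹)*g⁻¹) (g) : kˣ) : k) * ((μ (g*(h*w*h⁻¹)) (h) : kˣ) : k) * ((μ (g) (h*w*h⁻¹) : kˣ) : k) * ((μ (h*w*h⁻¹)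 (h) : kˣ) : k) * ((μ (g) (h*w) : kˣ) : k) * ((μ (h) (w) : kˣ) : k)) * i1 + (((μ (g*h) (w) : kˣ) : k) * ((μ (h) (w) : kˣ) : k) * ((μ (g) (h*w) : kˣ) : k) * ((μ (g) (h*w*h⁻¹) : kˣ) : k) * ((μ (h*w*h⁻¹) (h) : kˣ) : k) * ((μ (g) (h*w) : kˣ) : k) * ((μ (h) (w) : kˣ) : k)) * i2 - (((μ (g*h) (w) : kˣ) : k) * ((μ (h) (w) : kˣ) : k) * ((μ (g) (h*w) : kˣ) : k) * ((μ (g) (h) : kˣ) : k) * ((μ (g*(h*w*h⁻¹)*g⁻¹) (g*h) : kˣ) : k) * ((μ (h*w*h⁻¹) (h) : kˣ) : k) * ((μ (g) (h*w) : kˣ) : k) * ((μ (h) (w) : kˣ) : k)) * h2 - (((μ (g*h) (w) : kˣ) : k) * ((μ (h) (w) : kˣ) : k) * ((μ (g) (h*w) : kˣ) : k) * ((μ (g) (h) : kˣ) : k) * ((μ (g*(h*w*h⁻¹)*g⁻¹) (g*h) : kˣ) : k) * ((lam (g) (h*w*h⁻¹) : kˣ) : k) * ((μ (g*(h*w*h⁻¹)*g⁻¹)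 (g) : kˣ) : k) * ((μ (h) (w) : kˣ) : k)) * i3 - (((μ (g*h) (w) : kˣ) : k) * ((μ (h) (w) : kˣ) : k) * ((μ (g) (h*w) : kˣ) : k) * ((μ (g) (h) : kˣ) : k) * ((μ (g*(h*w*h⁻¹)*g⁻¹) (g*h) : kˣ) : k) * ((lam (g) (h*w*h⁻¹) : kˣ) : k) * ((μ (g*(h*w*h⁻¹)*g⁻¹) (g) : kˣ) : k) * ((μ (g) (h*w*h⁻¹) : kˣ) : k) * ((μ (g*(h*w*h⁻¹)) (h) : kˣ) : k)) * h3
  exact mul_right_cancel₀ (by apply_rules [mul_ne_zero, Units.ne_zero]) key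

lemma S5 (g x y : G) :
    ((lam g (x*y) : kˣ) : k) * ((μ x y : kˣ) : k)
      = ((lam g x : kˣ) : k) * ((lam g y : kˣ) : k) * ((μ (g*x*g⁻¹) (g*y*g⁻¹) : kˣ) : k) := by
  have h1 := hlk g (x*y)
  have h2 := hlk g x
  have h3 := hlk g y
  have i1 := hck g x y
  have i2 := hck (g*x*g⁻¹) g y
  rw [show g*x*g⁻¹*g = g*x from by group] at i2
  have i3 := hck (g*x*g⁻¹) (g*y*g⁻¹) g
  rw [show g*x*g⁻¹*(g*y*g⁻¹) = g*(x*y)*g⁻¹ from by group,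
    show g*y*g⁻¹*g = g*y from by group] at i3
  have key : (((lam (g) (x*y) : kˣ) : k) * ((μ (x) (y) : kˣ) : k)) * (((μ (g*(x*y)*g⁻¹) (g) : kˣ) : k) * ((μ (g) (x*y) : kˣ) : k) * ((μ (g*x*g⁻¹) (g) : kˣ) : k) * ((μ (g*x) (y) : kˣ) : k) * ((μ (g) (x) : kˣ) : k) * ((μ (g) (y) : kˣ) : k) * ((μ (g*y*g⁻¹) (g) : kˣ) : k) * ((μ (g*x*g⁻¹) (g*y) : kˣ) : k)) = (((lam (g) (x) : kˣ) : k) * ((lam (g) (y) : kˣ) : k) * ((μ (g*x*g⁻¹) (g*y*g⁻¹) : kˣ) : k)) * (((μ (g*(x*y)*g⁻¹) (g) : kˣ) : k) * ((μ (g) (x*y) : kˣ) : k) * ((μ (g*x*g⁻¹) (g) : kˣ) : k) * ((μ (g*x) (y) : kˣ) : k) * ((μ (g) (x) : kˣ) : k) * ((μ (g) (y) : kˣ) : k) * ((μ (g*y*g⁻¹) (g) : kˣ) : k) * ((μ (g*x*g⁻¹) (g*y) : kˣ) : k)) := by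
    linear_combination (((μ (x) (y) : kˣ) : k) * ((μ (g) (x*y) : kˣ) : k) * ((μ (g*x*g⁻¹) (g) : kˣ) : k) * ((μ (g*x) (y) : kˣ) : k) * ((μ (g) (x) : kˣ) : k) * ((μ (g) (y) : kˣ) : k) * ((μ (g*y*g⁻¹) (g) : kˣ) : k) * ((μ (g*x*g⁻¹) (g*y) : kˣ) : k)) * h1 - (((μ (g) (x*y) : kˣ) : k) * ((μ (g*x*g⁻¹) (g) : kˣ) : k) * ((μ (g*x) (y) : kˣ) : k) * ((μ (g) (x) : kˣ) : k) * ((μ (g) (y) : kˣ) : k) * ((μ (g*y*g⁻¹) (g) : kˣ) : k) * ((μ (g*x*g⁻¹) (g*y) : kˣ) : k)) * i1 + (((μ (g) (x*y) : kˣ) : k) * ((μ (g) (x) : kˣ) : k) * ((μ (g*x) (y) : kˣ) : k) * ((μ (g) (x) : kˣ) : k) * ((μ (g) (y) : kˣ) : k) * ((μ (g*y*g⁻¹) (g) : kˣ) : k) * ((μ (g*x*g⁻¹) (g*y) : kˣ) : k)) * i2 - (((μ (g) (x*y) : kˣ) : k) * ((μ (g) (x) : kˣ) : k) * ((μ (g*x)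 (y) : kˣ) : k) * ((μ (g) (y) : kˣ) : k) * ((μ (g*x*g⁻¹) (g*y) : kˣ) : k) * ((μ (g) (y) : kˣ) : k) * ((μ (g*y*g⁻¹) (g) : kˣ) : k) * ((μ (g*x*g⁻¹) (g*y) : kˣ) : k)) * h2 - (((μ (g) (x*y) : kˣ) : k) * ((μ (g) (x) : kˣ) : k) * ((μ (g*x) (y) : kˣ) : k) * ((μ (g) (y) : kˣ) : k) * ((μ (g*x*g⁻¹) (g*y) : kˣ) : k) * ((lam (g) (x) : kˣ) : k) * ((μ (g*x*g⁻¹) (g) : kˣ) : k) * ((μ (g*y*g⁻¹) (g) : kˣ) : k) * ((μ (g*x*g⁻¹) (g*y) : kˣ) : k)) * h3 - (((μ (g) (x*y) : kˣ) : k) * ((μ (g) (x) : kˣ) : k) * ((μ (g*x) (y) : kˣ) : k) * ((μ (g) (y) : kˣ) : k) * ((μ (g*x*g⁻¹) (g*y) : kˣ) : k) * ((lam (g) (x) : kˣ) : k) * ((μ (g*x*g⁻¹) (g) : kˣ) : k) * ((lam (g) (y) : kˣ) : k) * ((μ (g*y*g⁻¹) (g) : kˣ) : k)) * i3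
  exact mul_right_cancel₀ (by apply_rules [mul_ne_zero, Units.ne_zero]) key

lemma S6 (g y : G) :
    ((lam g y⁻¹ : kˣ) : k) * ((lam g y : kˣ) : k) * ((μ (g*y⁻¹*g⁻¹) (g*y*g⁻¹) : kˣ) : k)
      = ((μ y⁻¹ y : kˣ) : k) := by
  have h2 := hlk g y⁻¹
  have h3 := hlk g y
  have i1 := hck g y⁻¹ y
  rw [show y⁻¹*y = 1 from by group, (hnk g).2, mul_one] at i1
  have i2 := hck (g*y⁻¹*g⁻¹) g y
  rw [show g*y⁻¹*g⁻¹*g = g*y⁻¹ from by group] at i2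
  have i3 := hck (g*y⁻¹*g⁻¹) (g*y*g⁻¹) g
  rw [show g*y⁻¹*g⁻¹*(g*y*g⁻¹) = 1 from by group, (hnk g).1, mul_one,
    show g*y*g⁻¹*g = g*y from by group] at i3
  have key : (((lam (g) (y⁻¹) : kˣ) : k) * ((lam (g) (y) : kˣ) : k) * ((μ (g*y⁻¹*g⁻¹) (g*y*g⁻¹) : kˣ) : k)) * (((μ (g*y⁻¹*g⁻¹) (g) : kˣ) : k) * ((μ (g*y*g⁻¹) (g) : kˣ) : k) * ((μ (g) (y⁻¹) : kˣ) : k) * ((μ (g*y⁻¹) (y) : kˣ) : k) * ((μ (g) (y) : kˣ) : k) * ((μ (g*y⁻¹*g⁻¹) (g*y) : kˣ) : k)) = (((μ (y⁻¹) (y) : kˣ) : k)) * (((μ (g*y⁻¹*g⁻¹) (g) : kˣ) : k) * ((μ (g*y*g⁻¹) (g) : kˣ) : k) * ((μ (g) (y⁻¹) : kˣ) : k) * ((μ (g*y⁻¹) (y) : kˣ) : k) * ((μ (g) (y) : kˣ) : k) * ((μ (g*y⁻¹*g⁻¹) (g*y) : kˣ) : k)) := by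
    linear_combination (((lam (g) (y) : kˣ) : k) * ((μ (g*y*g⁻¹) (g) : kˣ) : k) * ((μ (g*y⁻¹*g⁻¹) (g*y*g⁻¹) : kˣ) : k) * ((μ (g) (y⁻¹) : kˣ) : k) * ((μ (g*y⁻¹) (y) : kˣ) : k) * ((μ (g) (y) : kˣ) : k) * ((μ (g*y⁻¹*g⁻¹) (g*y) : kˣ) : k)) * h2 + (((μ (g) (y⁻¹) : kˣ) : k) * ((μ (g*y⁻¹*g⁻¹) (g*y*g⁻¹) : kˣ) : k) * ((μ (g) (y⁻¹) : kˣ) : k) * ((μ (g*y⁻¹) (y) : kˣ) : k) * ((μ (g) (y) : kˣ) : k) * ((μ (g*y⁻¹*g⁻¹) (g*y) : kˣ) : k)) * h3 + (((μ (g) (y⁻¹) : kˣ) : k) * ((μ (g) (y) : kˣ) : k) * ((μ (g) (y⁻¹) : kˣ) : k) * ((μ (g*y⁻¹) (y) : kˣ) : k) * ((μ (g) (y) : kˣ) : k) * ((μ (g*y⁻¹*g⁻¹) (g*y) : kˣ) : k)) * i3 + (((μ (g) (y⁻¹) : kˣ) : k) * ((μ (g) (y) : kˣ) : k) * ((μ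 (g*y*g⁻¹) (g) : kˣ) : k) * ((μ (g*y⁻¹*g⁻¹) (g*y) : kˣ) : k) * ((μ (g) (y) : kˣ) : k) * ((μ (g*y⁻¹*g⁻¹) (g*y) : kˣ) : k)) * i1 - (((μ (g) (y⁻¹) : kˣ) : k) * ((μ (g) (y) : kˣ) : k) * ((μ (g*y*g⁻¹) (g) : kˣ) : k) * ((μ (g*y⁻¹*g⁻¹) (g*y) : kˣ) : k) * ((μ (y⁻¹) (y) : kˣ) : k)) * i2
  exact mul_right_cancel₀ (by apply_rules [mul_ne_zero, Units.ne_zero]) key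

lemma S7 (g h : G) :
    ((lam h g : kˣ) : k) * ((μ (g*h*g⁻¹*h⁻¹) (h*g*h⁻¹) : kˣ) : k)
      = ((lam g⁻¹ (g*h*g⁻¹) : kˣ) : k) * ((μ (g*h*g⁻¹*h⁻¹) h : kˣ) : k) := by
  have h1 := hlk h g
  have h2 := hlk g⁻¹ (g*h*g⁻¹)
  rw [show g⁻¹*(g*h*g⁻¹)*g⁻¹⁻¹ = h from by group] at h2
  have j1 := hck (g*h*g⁻¹*h⁻¹) (h*g*h⁻¹) h
  rw [show g*h*g⁻¹*h⁻¹*(h*g*h⁻¹) = g from by group,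
    show h*g*h⁻¹*h = h*g from by group] at j1
  have j2 := hck (g*h*g⁻¹*h⁻¹) h g
  rw [show g*h*g⁻¹*h⁻¹*h = g*h*g⁻¹ from by group] at j2
  have j3 := hck g⁻¹ (g*h*g⁻¹) g
  rw [show g⁻¹*(g*h*g⁻¹) = h*g⁻¹ from by group,
    show g*h*g⁻¹*g = g*h from by group] at j3
  have j4 := hck g⁻¹ g h
  rw [show g⁻¹*g = 1 from by group, (hnk h).1, mul_one] at j4
  have j5 := hck h g⁻¹ g
  rw [show g⁻¹*g = 1 from by group, (hnk h).2, mul_one] at j5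
  have key : (((lam (h) (g) : kˣ) : k) * ((μ (g*h*g⁻¹*h⁻¹) (h*g*h⁻¹) : kˣ) : k)) * (((μ (h*g*h⁻¹) (h) : kˣ) : k) * ((μ (g) (h) : kˣ) : k) * ((μ (h) (g) : kˣ) : k) * ((μ (g*h*g⁻¹*h⁻¹) (h*g) : kˣ) : k) * ((μ (g⁻¹) (g*h*g⁻¹) : kˣ) : k) * ((μ (g*h*g⁻¹) (g) : kˣ) : k) * ((μ (g⁻¹) (g*h) : kˣ) : k) * ((μ (g⁻¹) (g) : kˣ) : k) * ((μ (h) (g⁻¹) : kˣ) : k) * ((μ (h*g⁻¹) (g) : kˣ) : k)) = (((lam (g⁻¹) (g*h*g⁻¹) : kˣ) : k) * ((μ (g*h*g⁻¹*h⁻¹) (h) : kˣ) : k)) * (((μ (h*g*h⁻¹) (h) : kˣ) : k) * ((μ (g) (h) : kˣ) : k) * ((μ (h) (g) : kˣ) : k) * ((μ (g*h*g⁻¹*h⁻¹) (h*g) : kˣ) : k) * ((μ (g⁻¹) (g*h*g⁻¹) : kˣ) : k) * ((μ (g*h*g⁻¹) (g) : kˣ) : k) * ((μ (g⁻¹) (g*h)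 : kˣ) : k) * ((μ (g⁻¹) (g) : kˣ) : k) * ((μ (h) (g⁻¹) : kˣ) : k) * ((μ (h*g⁻¹) (g) : kˣ) : k)) := by
    linear_combination (((μ (g*h*g⁻¹*h⁻¹) (h*g*h⁻¹) : kˣ) : k) * ((μ (g) (h) : kˣ) : k) * ((μ (h) (g) : kˣ) : k) * ((μ (g*h*g⁻¹*h⁻¹) (h*g) : kˣ) : k) * ((μ (g⁻¹) (g*h*g⁻¹) : kˣ) : k) * ((μ (g*h*g⁻¹) (g) : kˣ) : k) * ((μ (g⁻¹) (g*h) : kˣ) : k) * ((μ (g⁻¹) (g) : kˣ) : k) * ((μ (h) (g⁻¹) : kˣ) : k) * ((μ (h*g⁻¹) (g) : kˣ) : k)) * h1 + (((μ (h) (g) : kˣ) : k) * ((μ (h) (g) : kˣ) : k) * ((μ (g*h*g⁻¹*h⁻¹) (h*g) : kˣ) : k) * ((μ (g⁻¹) (g*h*g⁻¹) : kˣ) : k) * ((μ (g*h*g⁻¹) (g) : kˣ) : k) * ((μ (g⁻¹) (g*h) : kˣ) : k) * ((μ (g⁻¹) (g) : kˣ) : k) * ((μ (h) (g⁻¹)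 : kˣ) : k) * ((μ (h*g⁻¹) (g) : kˣ) : k)) * j1 - (((μ (h) (g) : kˣ) : k) * ((μ (h*g*h⁻¹) (h) : kˣ) : k) * ((μ (g*h*g⁻¹*h⁻¹) (h*g) : kˣ) : k) * ((μ (g⁻¹) (g*h*g⁻¹) : kˣ) : k) * ((μ (g*h*g⁻¹) (g) : kˣ) : k) * ((μ (g⁻¹) (g*h) : kˣ) : k) * ((μ (g⁻¹) (g) : kˣ) : k) * ((μ (h) (g⁻¹) : kˣ) : k) * ((μ (h*g⁻¹) (g) : kˣ) : k)) * j2 - (((μ (h) (g) : kˣ) : k) * ((μ (h*g*h⁻¹) (h) : kˣ) : k) * ((μ (g*h*g⁻¹*h⁻¹) (h*g) : kˣ) : k) * ((μ (g*h*g⁻¹*h⁻¹) (h) : kˣ) : k) * ((μ (g*h*g⁻¹) (g) : kˣ) : k) * ((μ (g*h*g⁻¹) (g) : kˣ) : k) * ((μ (g⁻¹) (g*h) : kˣ) : k) * ((μ (g⁻¹) (g) : kˣ) : k) * ((μ (h) (g⁻¹) : kˣ) : k) * ((μ (h*g⁻¹) (g) : kˣ) : k)) * h2 - (((μ (h) (g)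 : kˣ) : k) * ((μ (h*g*h⁻¹) (h) : kˣ) : k) * ((μ (g*h*g⁻¹*h⁻¹) (h*g) : kˣ) : k) * ((μ (g*h*g⁻¹*h⁻¹) (h) : kˣ) : k) * ((μ (g*h*g⁻¹) (g) : kˣ) : k) * ((lam (g⁻¹) (g*h*g⁻¹) : kˣ) : k) * ((μ (h) (g⁻¹) : kˣ) : k) * ((μ (g⁻¹) (g) : kˣ) : k) * ((μ (h) (g⁻¹) : kˣ) : k) * ((μ (h*g⁻¹) (g) : kˣ) : k)) * j3 + (((μ (h) (g) : kˣ) : k) * ((μ (h*g*h⁻¹) (h) : kˣ) : k) * ((μ (g*h*g⁻¹*h⁻¹) (h*g) : kˣ) : k) * ((μ (g*h*g⁻¹*h⁻¹) (h) : kˣ) : k) * ((μ (g*h*g⁻¹) (g) : kˣ) : k) * ((lam (g⁻¹) (g*h*g⁻¹) : kˣ) : k) * ((μ (h) (g⁻¹) : kˣ) : k) * ((μ (g⁻¹) (g*h*g⁻¹) : kˣ) : k) * ((μ (h*g⁻¹) (g) : kˣ) : k) * ((μ (h) (g⁻¹) : kˣ) : k) * ((μ (h*g⁻¹) (g) : kˣ)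 : k)) * j4 + (((μ (h) (g) : kˣ) : k) * ((μ (h*g*h⁻¹) (h) : kˣ) : k) * ((μ (g*h*g⁻¹*h⁻¹) (h*g) : kˣ) : k) * ((μ (g*h*g⁻¹*h⁻¹) (h) : kˣ) : k) * ((μ (g*h*g⁻¹) (g) : kˣ) : k) * ((lam (g⁻¹) (g*h*g⁻¹) : kˣ) : k) * ((μ (h) (g⁻¹) : kˣ) : k) * ((μ (g⁻¹) (g*h*g⁻¹) : kˣ) : k) * ((μ (h*g⁻¹) (g) : kˣ) : k) * ((μ (g) (h) : kˣ) : k) * ((μ (g⁻¹) (g*h) : kˣ) : k)) * j5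
  exact mul_right_cancel₀ (by apply_rules [mul_ne_zero, Units.ne_zero]) key

lemma S8 (h l : G) :
    ((μ h l : kˣ) : k) * ((μ (h*l)⁻¹ (h*l) : kˣ) : k)
      = ((μ (h*l)⁻¹ h : kˣ) : k) * ((μ l⁻¹ l : kˣ) : k) := by
  have i1 := hck (h*l)⁻¹ h l
  rw [show (h*l)⁻¹*h = l⁻¹ from by group] at i1
  exact i1.symm

end
end Scalars
section TwistHom
variable {G : Type} [Group G] [Fintype G] {k : Type} [Field k] [CharZero k]
  {A : Type} [AddCommGroup A] [Module k A]
variable (F : GFrobeniusAlgebra G k A) (μ lam : G → G → kˣ)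

section
variable
  (hck : ∀ g h l : G, ((μ g h : kˣ) : k) * ((μ (g*h) l : kˣ) : k)
      = ((μ h l : kˣ) : k) * ((μ g (h*l) : kˣ) : k))
  (hnk : ∀ g : G, ((μ 1 g : kˣ) : k) = 1 ∧ ((μ g 1 : kˣ) : k) = 1)
  (hlk : ∀ g h : G, ((lam g h : kˣ) : k) * ((μ (g*h*g⁻¹) g : kˣ) : k) = ((μ g h : kˣ) : k))

include hck hnk hlk

lemma thom_assoc (g h l : G) (a b c : A) :
    tmul F μ (tmul F μ (F.proj g a) (F.proj h b)) (F.proj l c)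
      = tmul F μ (F.proj g a) (tmul F μ (F.proj h b) (F.proj l c)) := by
  rw [tmul_hom F μ (F.proj_mem g a) (F.proj_mem h b),
    tmul_hom F μ (F.proj_mem h b) (F.proj_mem l c)]
  simp only [map_smul, LinearMap.smul_apply]
  rw [tmul_hom F μ (F.mul_mem g h _ (F.proj_mem g a) _ (F.proj_mem h b)) (F.proj_mem l c),
    tmul_hom F μ (F.proj_mem g a) (F.mul_mem h l _ (F.proj_mem h b) _ (F.proj_mem l c)),
    smul_smul, smul_smul, F.mul_assoc', hck g h l]

lemma thom_eta_inv (h l : G) (a b c : A) :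
    tη F μ a (tmul F μ (F.proj h b) (F.proj l c))
      = tη F μ (tmul F μ a (F.proj h b)) (F.proj l c) := by
  have step : ∀ x : G, tη F μ (F.mul (F.proj x a) (F.proj h b)) (F.proj l c)
      = ((μ l⁻¹ l : kˣ) : k) * F.η (F.proj x a) (F.mul (F.proj h b) (F.proj l c)) := fun x => by
    rw [tη_right F μ (F.proj_mem l c), ← F.η_invariant]
  rw [tmul_hom F μ (F.proj_mem h b) (F.proj_mem l c),
    tmul_right F μ (F.proj_mem h b) a]
  simp only [map_sum, map_smul, LinearMap.sum_apply, LinearMap.smul_apply, smul_eq_mul]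
  simp only [step]
  rw [tη_right F μ (F.mul_mem h l _ (F.proj_mem h b) _ (F.proj_mem l c)) a,
    Finset.sum_eq_single (h*l)⁻¹]
  · rw [η_proj F (F.mul_mem h l _ (F.proj_mem h b) _ (F.proj_mem l c))]
    linear_combination (F.η a (F.mul (F.proj h b) (F.proj l c))) * S8 μ lam hck hnk hlk h l
  · intro x _ hx
    rw [F.η_graded x (h*l) (fun h' => hx (eq_inv_of_mul_eq_one_left h')) _ (F.proj_mem x a)
        _ (F.mul_mem h l _ (F.proj_mem h b) _ (F.proj_mem l c))]
    ring
  · simp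

lemma thom_phimul (g h w : G) (a : A) :
    tφ F lam (g * h) (F.proj w a) = tφ F lam g (tφ F lam h (F.proj w a)) := by
  rw [tφ_hom F lam (g*h) (F.proj_mem w a), tφ_hom F lam h (F.proj_mem w a)]
  simp only [map_smul]
  rw [tφ_hom F lam g (F.φ_grading h w _ (F.proj_mem w a)),
    F.φ_mul g h, LinearMap.coe_comp, Function.comp_apply, smul_smul]
  congr 1
  rw [S4 μ lam hck hnk hlk g h w]
  ring

lemma thom_phialg (g x y : G) (a b : A) :
    tφ F lam g (tmul F μ (F.proj x a) (F.proj y b))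
      = tmul F μ (tφ F lam g (F.proj x a)) (tφ F lam g (F.proj y b)) := by
  rw [tmul_hom F μ (F.proj_mem x a) (F.proj_mem y b),
    tφ_hom F lam g (F.proj_mem x a), tφ_hom F lam g (F.proj_mem y b)]
  simp only [map_smul, LinearMap.smul_apply]
  rw [tφ_hom F lam g (F.mul_mem x y _ (F.proj_mem x a) _ (F.proj_mem y b)),
    F.φ_algebra,
    tmul_hom F μ (F.φ_grading g x _ (F.proj_mem x a)) (F.φ_grading g y _ (F.proj_mem y b))]
  simp only [smul_smul]
  congr 1
  linear_combination S5 μ lam hck hnk hlk g x y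

lemma thom_tc (g h : G) {a : A} (ha : a ∈ F.grading g) (b : A) :
    tmul F μ a (F.proj h b) = tmul F μ (tφ F lam g (F.proj h b)) a := by
  rw [tmul_hom F μ ha (F.proj_mem h b), F.twisted_comm g a ha (F.proj h b),
    tφ_hom F lam g (F.proj_mem h b)]
  simp only [map_smul, LinearMap.smul_apply]
  rw [tmul_hom F μ (F.φ_grading g h _ (F.proj_mem h b)) ha, smul_smul]
  congr 1
  exact (hlk g h).symm

lemma thom_metric (g x y : G) (a b : A) :
    tη F μ (tφ F lam g (F.proj x a)) (tφ F lam g (F.proj y b))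
      = (((F.χ g)⁻¹ : kˣ) : k) ^ 2 * tη F μ (F.proj x a) (F.proj y b) := by
  rw [tφ_hom F lam g (F.proj_mem x a), tφ_hom F lam g (F.proj_mem y b)]
  simp only [map_smul, LinearMap.smul_apply, smul_eq_mul]
  rw [tη_right F μ (F.φ_grading g y _ (F.proj_mem y b)), F.metric_invariance,
    tη_right F μ (F.proj_mem y b)]
  by_cases hxy : x * y = 1
  · obtain rfl : x = y⁻¹ := eq_inv_of_mul_eq_one_left hxy
    rw [show (g*y*g⁻¹)⁻¹ = g*y⁻¹*g⁻¹ from by group]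
    linear_combination ((((F.χ g)⁻¹ : kˣ) : k)^2 * F.η (F.proj y⁻¹ a) (F.proj y b))
      * S6 μ lam hck hnk hlk g y
  · rw [F.η_graded x y hxy _ (F.proj_mem x a) _ (F.proj_mem y b)]
    ring

end
end TwistHom
section TwistMain
variable {G : Type} [Group G] [Fintype G] {k : Type} [Field k] [CharZero k]
  {A : Type} [AddCommGroup A] [Module k A]
variable (F : GFrobeniusAlgebra G k A) (μ lam : G → G → kˣ)

/-- The twisted G-Frobenius algebra. -/
noncomputable def twistFrob
    (hck : ∀ g h l : G, ((μ g h : kˣ) : k) * ((μ (g*h) l : kˣ) : k)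
        = ((μ h l : kˣ) : k) * ((μ g (h*l) : kˣ) : k))
    (hnk : ∀ g : G, ((μ 1 g : kˣ) : k) = 1 ∧ ((μ g 1 : kˣ) : k) = 1)
    (hlk : ∀ g h : G, ((lam g h : kˣ) : k) * ((μ (g*h*g⁻¹) g : kˣ) : k) = ((μ g h : kˣ) : k)) :
    GFrobeniusAlgebra G k A where
  grading := F.grading
  proj := F.proj
  proj_mem := F.proj_mem
  proj_of_mem := F.proj_of_mem
  proj_of_ne := F.proj_of_ne
  sum_proj := F.sum_proj
  finiteDim := F.finiteDim
  mul := tmul F μ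
  mul_assoc' a b c := by
    rw [← F.sum_proj a, ← F.sum_proj b, ← F.sum_proj c]
    simp only [map_sum, LinearMap.sum_apply]
    refine Finset.sum_congr rfl fun g _ => ?_
    refine Finset.sum_congr rfl fun h _ => ?_
    refine Finset.sum_congr rfl fun l _ => ?_
    exact thom_assoc F μ lam hck hnk hlk _ _ _ _ _ _
  one := F.one
  one_mem := F.one_mem
  one_mul' a := by
    rw [tmul_left F μ F.one_mem a]
    conv_rhs => rw [← F.sum_proj a]
    refine Finset.sum_congr rfl fun h _ => ?_
    rw [(hnk h).1, F.one_mul', one_smul]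
  mul_one' a := by
    conv_lhs => rw [← F.sum_proj a]
    simp only [map_sum, LinearMap.sum_apply]
    conv_rhs => rw [← F.sum_proj a]
    refine Finset.sum_congr rfl fun g _ => ?_
    rw [tmul_hom F μ (F.proj_mem g a) F.one_mem, (hnk g).2, F.mul_one', one_smul]
  mul_mem g h a ha b hb := by
    rw [tmul_hom F μ ha hb]
    exact Submodule.smul_mem _ _ (F.mul_mem g h a ha b hb)
  η := tη F μ
  η_nondeg a ha := by
    apply F.η_nondeg
    intro b
    have h1 : ∀ h : G, F.η a (F.proj h b) = 0 := fun h => by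
      have h2 := ha (F.proj h b)
      rw [tη_right F μ (F.proj_mem h b)] at h2
      exact (mul_eq_zero.mp h2).resolve_left (Units.ne_zero _)
    conv_lhs => rw [← F.sum_proj b]
    rw [map_sum]
    exact Finset.sum_eq_zero fun h _ => h1 h
  η_graded g h hgh a ha b hb := by
    rw [tη_right F μ hb, F.η_graded g h hgh a ha b hb, mul_zero]
  η_invariant a b c := by
    rw [← F.sum_proj b, ← F.sum_proj c]
    simp only [map_sum, LinearMap.sum_apply]
    refine Finset.sum_congr rfl fun h _ => ?_
    refine Finset.sum_congr rfl fun l _ => ?_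
    exact thom_eta_inv F μ lam hck hnk hlk _ _ _ _ _
  φ := tφ F lam
  φ_one := by
    refine LinearMap.ext fun a => ?_
    rw [tφ_apply]
    simp only [S1 μ lam hck hnk hlk, one_smul, F.φ_one, LinearMap.id_coe, id_eq]
    exact F.sum_proj a
  φ_mul g h := by
    refine LinearMap.ext fun a => ?_
    rw [← F.sum_proj a]
    simp only [map_sum, LinearMap.coe_comp, Function.comp_apply]
    refine Finset.sum_congr rfl fun w _ => ?_
    exact thom_phimul F μ lam hck hnk hlk _ _ _ _
  φ_algebra g a b := by
    rw [← F.sum_proj a, ← F.sum_proj b]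
    simp only [map_sum, LinearMap.sum_apply]
    refine Finset.sum_congr rfl fun x _ => ?_
    refine Finset.sum_congr rfl fun y _ => ?_
    exact thom_phialg F μ lam hck hnk hlk _ _ _ _ _
  φ_unit g := by
    rw [tφ_hom F lam g F.one_mem, S2 μ lam hck hnk hlk g, one_smul, F.φ_unit]
  φ_grading g h a ha := by
    rw [tφ_hom F lam g ha]
    exact Submodule.smul_mem _ _ (F.φ_grading g h a ha)
  χ := F.χ
  twisted_comm g a ha b := by
    rw [← F.sum_proj b]
    simp only [map_sum, LinearMap.sum_apply]
    refine Finset.sum_congr rfl fun h _ => ?_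
    exact thom_tc F μ lam hck hnk hlk _ _ ha b
  self_invariance g a ha := by
    rw [tφ_hom F lam g ha, F.self_invariance g a ha, S3 μ lam hck hnk hlk g, one_smul]
  metric_invariance g a b := by
    rw [← F.sum_proj a, ← F.sum_proj b]
    simp only [map_sum, LinearMap.sum_apply, Finset.mul_sum]
    refine Finset.sum_congr rfl fun x _ => ?_
    refine Finset.sum_congr rfl fun y _ => ?_
    exact thom_metric F μ lam hck hnk hlk _ _ _ _ _
  trace_axiom g h c hc := by
    have hL : F.proj g ∘ₗ (tmul F μ) c ∘ₗ tφ F lam h ∘ₗ F.proj g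
        = (((lam h g : kˣ) : k) * ((μ (g*h*g⁻¹*h⁻¹) (h*g*h⁻¹) : kˣ) : k))
          • (F.proj g ∘ₗ F.mul c ∘ₗ F.φ h ∘ₗ F.proj g) := by
      refine LinearMap.ext fun a => ?_
      simp only [LinearMap.coe_comp, Function.comp_apply, LinearMap.smul_apply]
      rw [tφ_hom F lam h (F.proj_mem g a), map_smul,
        tmul_hom F μ hc (F.φ_grading h g _ (F.proj_mem g a))]
      simp only [map_smul, smul_smul]
      try rw [mul_comm (((lam h g : kˣ) : k))]
    have hX : ∀ a : A, F.mul c (F.proj h a) ∈ F.grading (g*h*g⁻¹) := fun a => by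
      have := F.mul_mem _ _ c hc _ (F.proj_mem h a)
      rwa [show g*h*g⁻¹*h⁻¹*h = g*h*g⁻¹ from by group] at this
    have hR : F.proj h ∘ₗ tφ F lam g⁻¹ ∘ₗ (tmul F μ) c ∘ₗ F.proj h
        = (((lam g⁻¹ (g*h*g⁻¹) : kˣ) : k) * ((μ (g*h*g⁻¹*h⁻¹) h : kˣ) : k))
          • (F.proj h ∘ₗ F.φ g⁻¹ ∘ₗ F.mul c ∘ₗ F.proj h) := by
      refine LinearMap.ext fun a => ?_
      simp only [LinearMap.coe_comp, Function.comp_apply, LinearMap.smul_apply]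
      rw [tmul_hom F μ hc (F.proj_mem h a), map_smul,
        tφ_hom F lam g⁻¹ (hX a)]
      simp only [map_smul, smul_smul]
      try rw [mul_comm (((μ (g*h*g⁻¹*h⁻¹) h : kˣ) : k))]
    rw [hL, hR, map_smul, map_smul, smul_eq_mul, smul_eq_mul]
    have ht := F.trace_axiom g h c hc
    have hs := S7 μ lam hck hnk hlk g h
    linear_combination (((lam h g : kˣ) : k) * ((μ (g*h*g⁻¹*h⁻¹) (h*g*h⁻¹) : kˣ) : k)) * ht
      + (((F.χ g⁻¹ : kˣ) : k)
          * LinearMap.trace k A (F.proj h ∘ₗ F.φ g⁻¹ ∘ₗ F.mul c ∘ₗ F.proj h)) * hs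

end TwistMain
/-- `(μ, lam)` is a universal twist of `G`-Frobenius algebras if and only if
`μ` is a normalized 2-cocycle on `G` with values in `kˣ` (`μ(g,h)·μ(g*h,l) = μ(h,l)·μ(g,h*l)`
and `μ(e,g) = μ(g,e) = 1`) and `lam(g,h) = μ(g,h)·μ(g*h*g⁻¹,g)⁻¹`. In particular universal
twists are in bijection with normalized 2-cocycles `Z²(G,kˣ)`. -/
theorem universal_twists_are_cocycles (G : Type) [Group G] [Fintype G]
    (k : Type) [Field k] [CharZero k] (μ lam : G → G → kˣ) :
    IsUniversalTwist G k μ lam ↔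
      ((∀ g h l : G, μ g h * μ (g * h) l = μ h l * μ g (h * l)) ∧
        (∀ g : G, μ 1 g = 1 ∧ μ g 1 = 1) ∧
        (∀ g h : G, lam g h = μ g h * (μ (g * h * g⁻¹) g)⁻¹)) := by
  constructor
  · intro H
    letI := Classical.decEq G
    exact forward_direction μ lam H
  · rintro ⟨hc, hn, hl⟩
    have hck : ∀ g h l : G, ((μ g h : kˣ) : k) * ((μ (g*h) l : kˣ) : k)
        = ((μ h l : kˣ) : k) * ((μ g (h*l) : kˣ) : k) := fun g h l => by
      have := congrArg (Units.val) (hc g h l)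
      push_cast at this
      exact this
    have hnk : ∀ g : G, ((μ 1 g : kˣ) : k) = 1 ∧ ((μ g 1 : kˣ) : k) = 1 := fun g => by
      constructor
      · have := congrArg (Units.val) (hn g).1; push_cast at this; exact this
      · have := congrArg (Units.val) (hn g).2; push_cast at this; exact this
    have hlk : ∀ g h : G, ((lam g h : kˣ) : k) * ((μ (g*h*g⁻¹) g : kˣ) : k)
        = ((μ g h : kˣ) : k) := fun g h => by
      have h1 : lam g h * μ (g*h*g⁻¹) g = μ g h := by rw [hl g h, inv_mul_cancel_right]
      have := congrArg (Units.val) h1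
      push_cast at this
      exact this
    intro A _ _ F
    refine ⟨twistFrob F μ lam hck hnk hlk, rfl, rfl, rfl, rfl, ?_, ?_, ?_⟩
    · intro g h a ha b hb
      exact tmul_hom F μ ha hb
    · intro g a ha b hb
      have := tη_right F μ hb a
      rwa [inv_inv] at this
    · intro g h a ha
      exact tφ_hom F lam g ha
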